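/- arXiv:1607.05460 — 3 statements merged into one kernel-verified Lean document; each statement's English description precedes it below -/
import Mathlib

section
/- For any d ≥ 2 and n ≥ d(d+2), there exists a connected graph on n vertices with minimum degree d such that every spanning tree of the graph has an internal vertex of degree exactly 2. -/
attribute [local instance] Classical.propDecidable

namespace HISTaux

variable {V : Type*}

/-- Any walk from inside `S` to outside `S` witnesses a crossing edge. -/
lemma exists_cross {H : SimpleGraph V} {S : Set V} {u v : V} (w : H.Walk u v) :
    u ∈ S → v ∉ S → ∃ a b, H.Adj a b ∧ a ∈ S ∧ b ∉ S := by
  induction w with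
  | nil => intro hu hv; exact absurd hu hv
  | @cons a b c h p ih =>
      intro hu hv
      by_cases hb : b ∈ S
      · exact ih hb hv
      · exact ⟨a, b, h, hu, hb⟩

/-- In a path starting at `a`, there is at most one `x` with `s(a,x)` an edge. -/
lemma start_edge_unique {H : SimpleGraph V} {a b : V} (p : H.Walk a b) (hp : p.IsPath)
    {x y : V} (hx : s(a, x) ∈ p.edges) (hy : s(a, y) ∈ p.edges) : x = y := by
  induction p with
  | nil => simp at hx
  | @cons a c b h q ih =>
      rw [SimpleGraph.Walk.cons_isPath_iff] at hp
      have key : ∀ z : V, s(a, z) ∈ (SimpleGraph.Walk.cons h q).edges → z = c := by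
        intro z hz
        rw [SimpleGraph.Walk.edges_cons, List.mem_cons] at hz
        rcases hz with hz | hz
        · have := Sym2.eq_iff.mp hz
          rcases this with ⟨-, h2⟩ | ⟨h1, h2⟩
          · exact h2
          · exact absurd h1 h.ne
        · exact absurd (SimpleGraph.Walk.fst_mem_support_of_mem_edges q hz) hp.2
      rw [key x hx, key y hy]


open SimpleGraph Walk in
/-- In a tree, some vertex of `W` (each of which has a `T`-neighbour in `W`)
has exactly one `T`-neighbour in `W`. -/
lemma exists_unique_nbr {n : ℕ} {T : SimpleGraph (Fin n)} (hconn : T.Connected)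
    (hacyc : T.IsAcyclic) (W : Finset (Fin n)) (hWne : W.Nonempty)
    (hdeg : ∀ w ∈ W, ∃ x ∈ W, T.Adj w x) :
    ∃ v ∈ W, ∃ u ∈ W, T.Adj v u ∧ ∀ x ∈ W, T.Adj v x → x = u := by
  obtain ⟨r, hr⟩ := hWne
  have htree : T.IsTree := ⟨hconn, hacyc⟩
  choose P hP hPU using fun w => htree.existsUnique_path w r
  obtain ⟨v, hvW, hmax⟩ := W.exists_max_image (fun w => (P w).length) ⟨r, hr⟩
  have key : ∀ x ∈ W, T.Adj v x → s(v, x) ∈ (P v).edges := by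
    intro x hxW hadj
    by_cases hsup : x ∈ (P v).support
    · by_contra he
      have htake : ((P v).takeUntil x hsup).IsPath := (hP v).takeUntil hsup
      have hne : s(x, v) ∉ ((P v).takeUntil x hsup).edges := by
        intro hmem
        have := SimpleGraph.Walk.edges_takeUntil_subset (P v) hsup hmem
        rw [Sym2.eq_swap] at this
        exact he this
      have hcyc := SimpleGraph.Path.cons_isCycle
        ⟨(P v).takeUntil x hsup, htake⟩ hadj.symm hne
      exact hacyc _ hcyc
    · exfalso
      have hQ : (SimpleGraph.Walk.cons hadj.symm (P v)).IsPath :=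
        (SimpleGraph.Walk.cons_isPath_iff _ _).2 ⟨hP v, hsup⟩
      have heq := hPU x (SimpleGraph.Walk.cons hadj.symm (P v)) hQ
      have hlen : (P x).length = (P v).length + 1 := by
        rw [← heq]; simp
      have := hmax x hxW
      omega
  obtain ⟨x₀, hx₀W, hx₀⟩ := hdeg v hvW
  refine ⟨v, hvW, x₀, hx₀W, hx₀, ?_⟩
  intro x hxW hadj
  exact start_edge_unique (P v) (hP v) (key x hxW hadj) (key x₀ hx₀W hx₀)


/-! ### The construction: a core clique `K_d` with a pendant clique hung on each core vertex -/

/-- attachment vertex (as a natural number) of blob `j`. -/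
def att (d j : ℕ) : ℕ := d + j * (d + 1)

/-- blob index of a non-core vertex value `m` (only meaningful for `d ≤ m`). -/
def blkOf (d m : ℕ) : ℕ := min (d - 1) ((m - d) / (d + 1))

/-- The graph: core clique on `{0,…,d-1}`; blob `j` is a clique `{m ≥ d | blkOf d m = j}`;
and a bridge from core vertex `j` to the attachment vertex of blob `j`. -/
def Gr (d n : ℕ) : SimpleGraph (Fin n) where
  Adj u v := u ≠ v ∧
    ((u.val < d ∧ v.val < d) ∨
     (d ≤ u.val ∧ d ≤ v.val ∧ blkOf d u.val = blkOf d v.val) ∨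
     (u.val < d ∧ v.val = att d u.val) ∨
     (v.val < d ∧ u.val = att d v.val))
  symm := by
    constructor
    rintro u v ⟨hne, h⟩
    refine ⟨hne.symm, ?_⟩
    tauto
  loopless := by constructor; rintro u ⟨hne, -⟩; exact hne rfl

section facts

variable {d n : ℕ}

lemma d_le_att {j : ℕ} : d ≤ att d j := by unfold att; omega

lemma att_add_lt_n (hd : 1 ≤ d) (hn : d * (d + 2) ≤ n) {j t : ℕ} (hj : j < d) (ht : t ≤ d) :
    att d j + t < n := by
  obtain ⟨k, rfl⟩ : ∃ k, d = k + 1 := ⟨d - 1, by omega⟩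
  unfold att
  have e1 : j * (k + 1 + 1) ≤ k * (k + 1 + 1) := Nat.mul_le_mul_right _ (by omega)
  have e2 : k * (k + 1 + 1) + (k + 1) + 1 + (k + 1) ≤ (k + 1) * (k + 1 + 2) := by ring_nf; omega
  omega

lemma att_lt_n (hd : 1 ≤ d) (hn : d * (d + 2) ≤ n) {j : ℕ} (hj : j < d) : att d j < n := by
  have := att_add_lt_n hd hn hj (Nat.zero_le d)
  omega

lemma blkOf_lt (hd : 1 ≤ d) (m : ℕ) : blkOf d m < d := by
  unfold blkOf; omega

lemma blkOf_att_add {j t : ℕ} (hj : j < d) (ht : t ≤ d) :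
    blkOf d (att d j + t) = j := by
  unfold blkOf att
  have h1 : d + j * (d + 1) + t - d = t + j * (d + 1) := by omega
  rw [h1, Nat.add_mul_div_right _ _ (by omega : 0 < d + 1),
    Nat.div_eq_of_lt (by omega : t < d + 1)]
  omega

lemma blkOf_att {j : ℕ} (hj : j < d) : blkOf d (att d j) = j := by
  have := blkOf_att_add (t := 0) hj (Nat.zero_le d)
  simpa using this

end facts

section graphfacts

variable {d n : ℕ}

lemma core_card (hd : 1 ≤ d) (hn : d * (d + 2) ≤ n) :
    ((Finset.univ : Finset (Fin n)).filter (fun w => w.val < d)).card = d := by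
  have hdn : d ≤ n := le_trans (by nlinarith) hn
  apply Finset.card_eq_of_bijective (fun i h => (⟨i, lt_of_lt_of_le h hdn⟩ : Fin n))
  · intro a ha
    simp only [Finset.mem_filter] at ha
    exact ⟨a.val, ha.2, Fin.ext rfl⟩
  · intro i h
    simp [h]
  · intro i j hi hj hij
    exact congrArg Fin.val hij

lemma core_nbrs (hd : 1 ≤ d) (hn : d * (d + 2) ≤ n) (u : Fin n) (hu : u.val < d) :
    (Gr d n).neighborFinset u =
      ((Finset.univ.filter (fun w : Fin n => w.val < d)).erase u) ∪
        {(⟨att d u.val, att_lt_n hd hn hu⟩ : Fin n)} := by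
  ext w
  rw [SimpleGraph.mem_neighborFinset]
  constructor
  · rintro ⟨hne, h | h | h | h⟩
    · exact Finset.mem_union_left _ (Finset.mem_erase.mpr
        ⟨fun hh => hne (hh ▸ rfl), Finset.mem_filter.mpr ⟨Finset.mem_univ _, h.2⟩⟩)
    · exact absurd h.1 (by omega)
    · exact Finset.mem_union_right _ (by simp [Fin.ext_iff, h.2])
    · have := d_le_att (d := d) (j := w.val)
      omega
  · intro hw
    rcases Finset.mem_union.mp hw with hw | hw
    · rw [Finset.mem_erase, Finset.mem_filter] at hw
      exact ⟨fun hh => hw.1 (hh ▸ rfl), Or.inl ⟨hu, hw.2.2⟩⟩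
    · rw [Finset.mem_singleton] at hw
      subst hw
      refine ⟨?_, Or.inr (Or.inr (Or.inl ⟨hu, rfl⟩))⟩
      intro hh
      have := d_le_att (d := d) (j := u.val)
      rw [hh] at hu
      simp only at hu
      omega

lemma core_degree (hd : 1 ≤ d) (hn : d * (d + 2) ≤ n) (u : Fin n) (hu : u.val < d) :
    (Gr d n).degree u = d := by
  rw [SimpleGraph.degree, core_nbrs hd hn u hu]
  have hdisj : Disjoint ((Finset.univ.filter (fun w : Fin n => w.val < d)).erase u)
      {(⟨att d u.val, att_lt_n hd hn hu⟩ : Fin n)} := by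
    rw [Finset.disjoint_singleton_right, Finset.mem_erase, Finset.mem_filter]
    rintro ⟨-, -, h⟩
    simp only at h
    have := d_le_att (d := d) (j := u.val)
    omega
  have hmem : u ∈ Finset.univ.filter (fun w : Fin n => w.val < d) :=
    Finset.mem_filter.mpr ⟨Finset.mem_univ _, hu⟩
  rw [Finset.card_union_of_disjoint hdisj, Finset.card_erase_of_mem hmem,
    core_card hd hn, Finset.card_singleton]
  omega

lemma blob_degree (hd : 1 ≤ d) (hn : d * (d + 2) ≤ n) (v : Fin n) (hv : d ≤ v.val) :
    d ≤ (Gr d n).degree v := by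
  set j := blkOf d v.val with hj_def
  have hj : j < d := blkOf_lt hd _
  set f : ℕ → Fin n := fun t =>
    (⟨att d j + min t d, att_add_lt_n hd hn hj (min_le_right _ _)⟩ : Fin n) with hf
  have hinj : Set.InjOn f (Finset.range (d + 1)) := by
    intro a ha b hb hab
    simp only [Finset.coe_range, Set.mem_Iio] at ha hb
    have := congrArg Fin.val hab
    simp only [hf] at this
    omega
  have hcard : ((Finset.range (d + 1)).image f).card = d + 1 := by
    rw [Finset.card_image_of_injOn hinj, Finset.card_range]
  have hsub : (Finset.range (d + 1)).image f ⊆ insert v ((Gr d n).neighborFinset v) := by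
    intro w hw
    rw [Finset.mem_image] at hw
    obtain ⟨t, ht, rfl⟩ := hw
    rw [Finset.mem_range] at ht
    by_cases hwv : f t = v
    · rw [hwv]; exact Finset.mem_insert_self v _
    · refine Finset.mem_insert_of_mem ?_
      rw [SimpleGraph.mem_neighborFinset]
      refine ⟨fun hh => hwv hh.symm, Or.inr (Or.inl ⟨hv, ?_, ?_⟩)⟩
      · simp only [hf]
        have := d_le_att (d := d) (j := j)
        omega
      · simp only [hf]
        rw [blkOf_att_add hj (by omega : min t d ≤ d)]
  have := Finset.card_le_card hsub
  rw [hcard] at this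
  have hins := Finset.card_insert_le v ((Gr d n).neighborFinset v)
  rw [SimpleGraph.degree]
  omega

lemma Gr_connected (hd : 1 ≤ d) (hn : d * (d + 2) ≤ n) : (Gr d n).Connected := by
  have hdn : 0 < n := by nlinarith
  have hreach : ∀ v : Fin n, (Gr d n).Reachable v ⟨0, hdn⟩ := by
    have hcore : ∀ u : Fin n, u.val < d → (Gr d n).Reachable u ⟨0, hdn⟩ := by
      intro u hu
      by_cases h0 : u = ⟨0, hdn⟩
      · exact h0 ▸ SimpleGraph.Reachable.refl _
      · exact SimpleGraph.Adj.reachable ⟨h0, Or.inl ⟨hu, show (0:ℕ) < d by omega⟩⟩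
    intro v
    by_cases hv : v.val < d
    · exact hcore v hv
    · push_neg at hv
      set j := blkOf d v.val with hj_def
      have hj : j < d := blkOf_lt hd _
      have hattn : att d j < n := att_lt_n hd hn hj
      set attF : Fin n := ⟨att d j, hattn⟩ with hattF
      have hjn : j < n := by omega
      set coreJ : Fin n := ⟨j, hjn⟩ with hcoreJ
      have R1 : (Gr d n).Reachable v attF := by
        by_cases hva : v = attF
        · exact hva ▸ SimpleGraph.Reachable.refl _
        · refine SimpleGraph.Adj.reachable ⟨hva, Or.inr (Or.inl ⟨hv, d_le_att, ?_⟩)⟩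
          simp only [hattF]
          rw [blkOf_att hj]
      have R2 : (Gr d n).Reachable attF coreJ := by
        refine SimpleGraph.Adj.reachable ⟨?_, Or.inr (Or.inr (Or.inr ⟨?_, ?_⟩))⟩
        · intro hh
          have := congrArg Fin.val hh
          simp only [hattF, hcoreJ] at this
          have := d_le_att (d := d) (j := j)
          omega
        · simpa [hcoreJ] using hj
        · simp [hattF, hcoreJ]
      exact (R1.trans R2).trans (hcore coreJ (by simpa [hcoreJ] using hj))
  rw [SimpleGraph.connected_iff]
  exact ⟨fun u v => (hreach u).trans (hreach v).symm, ⟨⟨0, hdn⟩⟩⟩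

end graphfacts

section main

variable {d n : ℕ}

lemma bridge_forced (hd : 1 ≤ d) (hn : d * (d + 2) ≤ n) {T : SimpleGraph (Fin n)}
    (hle : T ≤ Gr d n) (hTc : T.Connected) (cj aj : Fin n) (hcj : cj.val < d)
    (haj : aj.val = att d cj.val) : T.Adj cj aj := by
  set S : Set (Fin n) := {w | d ≤ w.val ∧ blkOf d w.val = cj.val} with hS
  have hajS : aj ∈ S := by
    constructor
    · rw [haj]; exact d_le_att
    · rw [haj, blkOf_att hcj]
  have hcjS : cj ∉ S := by
    rintro ⟨h1, -⟩; omega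
  obtain ⟨p⟩ := hTc.preconnected aj cj
  obtain ⟨a, b, hab, haS, hbS⟩ := exists_cross p hajS hcjS
  have hG : (Gr d n).Adj a b := hle hab
  obtain ⟨hne, h | h | h | h⟩ := hG
  · exact absurd h.1 (by have := haS.1; omega)
  · exact absurd ⟨h.2.1, h.2.2 ▸ haS.2⟩ hbS
  · exact absurd h.1 (by have := haS.1; omega)
  · obtain ⟨hbcore, ha'⟩ := h
    have hblk : blkOf d a.val = b.val := by rw [ha', blkOf_att hbcore]
    have hbv : b.val = cj.val := by rw [← hblk]; exact haS.2
    have hb : b = cj := Fin.ext hbv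
    have ha : a = aj := by
      apply Fin.ext
      rw [ha', hbv, ← haj]
    rw [← ha, ← hb]
    exact hab.symm

lemma core_nbr_in_core (hd : 2 ≤ d) (hn : d * (d + 2) ≤ n) {T : SimpleGraph (Fin n)}
    (hle : T ≤ Gr d n) (hTc : T.Connected) (v : Fin n) (hv : v.val < d) :
    ∃ x : Fin n, x.val < d ∧ T.Adj v x := by
  set S : Set (Fin n) := {w | w = v ∨ (d ≤ w.val ∧ blkOf d w.val = v.val)} with hS
  set i' : ℕ := if v.val = 0 then 1 else 0 with hi'
  have hi'd : i' < d := by rw [hi']; split <;> omega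
  have hi'v : i' ≠ v.val := by rw [hi']; split <;> omega
  have hi'n : i' < n := by have : d ≤ n := le_trans (by nlinarith) hn; omega
  set c' : Fin n := ⟨i', hi'n⟩ with hc'
  have hvS : v ∈ S := Or.inl rfl
  have hc'S : c' ∉ S := by
    rintro (h | ⟨h1, -⟩)
    · have h2 : c'.val = i' := rfl
      have h3 := congrArg Fin.val h
      rw [h2] at h3
      exact hi'v h3
    · have hcv : c'.val = i' := rfl
      rw [hcv] at h1
      omega
  obtain ⟨p⟩ := hTc.preconnected v c'
  obtain ⟨a, b, hab, haS, hbS⟩ := exists_cross p hvS hc'S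
  have hG : (Gr d n).Adj a b := hle hab
  rcases haS with rfl | ⟨hda, hba⟩
  · obtain ⟨hne, h | h | h | h⟩ := hG
    · exact ⟨b, h.2, hab⟩
    · exact absurd h.1 (by omega)
    · exact absurd (Or.inr ⟨h.2 ▸ d_le_att, by rw [h.2, blkOf_att hv]⟩) hbS
    · have := d_le_att (d := d) (j := b.val)
      omega
  · obtain ⟨hne, h | h | h | h⟩ := hG
    · exact absurd h.1 (by omega)
    · exact absurd (Or.inr ⟨h.2.1, h.2.2 ▸ hba⟩) hbS
    · exact absurd h.1 (by omega)
    · obtain ⟨hbcore, ha'⟩ := h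
      have hbv : b.val = v.val := by
        have := blkOf_att (d := d) hbcore
        rw [← ha'] at this
        rw [← this]; exact hba
      exact absurd (Or.inl (Fin.ext hbv)) hbS

end main

end HISTaux

/-- For any `d ≥ 2` and `n ≥ d(d+2)`, there exists a connected graph on `n` vertices with
minimum degree `d` such that every spanning tree has an internal vertex of degree exactly 2. -/
theorem stmt_0 (d n : ℕ) (hd : 2 ≤ d) (hn : d * (d + 2) ≤ n) :
    ∃ G : SimpleGraph (Fin n), G.Connected ∧
      (∀ v, d ≤ G.degree v) ∧ (∃ v, G.degree v = d) ∧
      (∀ T : SimpleGraph (Fin n), T ≤ G → T.Connected → T.IsAcyclic →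
        ∃ v, T.degree v = 2) := by
  have hd1 : 1 ≤ d := by omega
  have hn0 : 0 < n := by nlinarith
  refine ⟨HISTaux.Gr d n, HISTaux.Gr_connected hd1 hn, ?_, ?_, ?_⟩
  · intro v
    by_cases hv : v.val < d
    · rw [HISTaux.core_degree hd1 hn v hv]
    · exact HISTaux.blob_degree hd1 hn v (by omega)
  · exact ⟨⟨0, hn0⟩, HISTaux.core_degree hd1 hn _ (by simpa using (show 0 < d by omega))⟩
  · intro T hle hTc hTa
    set W : Finset (Fin n) := Finset.univ.filter (fun w : Fin n => w.val < d) with hW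
    have hWne : W.Nonempty := ⟨⟨0, hn0⟩, Finset.mem_filter.mpr ⟨Finset.mem_univ _, by simpa using (show 0 < d by omega)⟩⟩
    have hdeg : ∀ w ∈ W, ∃ x ∈ W, T.Adj w x := by
      intro w hw
      obtain ⟨x, hx, hadj⟩ := HISTaux.core_nbr_in_core hd hn hle hTc w
        (Finset.mem_filter.mp hw).2
      exact ⟨x, Finset.mem_filter.mpr ⟨Finset.mem_univ _, hx⟩, hadj⟩
    obtain ⟨v, hvW, u, huW, hadj_u, huniq⟩ :=
      HISTaux.exists_unique_nbr hTc hTa W hWne hdeg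
    have hv : v.val < d := (Finset.mem_filter.mp hvW).2
    have hu : u.val < d := (Finset.mem_filter.mp huW).2
    set attF : Fin n := ⟨HISTaux.att d v.val, HISTaux.att_lt_n hd1 hn hv⟩ with hattF
    have hbridge : T.Adj v attF :=
      HISTaux.bridge_forced hd1 hn hle hTc v attF hv rfl
    have hnbrs : T.neighborFinset v = {u, attF} := by
      ext w
      rw [SimpleGraph.mem_neighborFinset, Finset.mem_insert, Finset.mem_singleton]
      constructor
      · intro hadj
        obtain ⟨hne, h | h | h | h⟩ := hle hadj
        · exact Or.inl (huniq w (Finset.mem_filter.mpr ⟨Finset.mem_univ _, h.2⟩) hadj)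
        · exact absurd h.1 (by omega)
        · exact Or.inr (Fin.ext h.2)
        · have := HISTaux.d_le_att (d := d) (j := w.val)
          omega
      · rintro (rfl | rfl)
        · exact hadj_u
        · exact hbridge
    refine ⟨v, ?_⟩
    rw [SimpleGraph.degree, hnbrs, Finset.card_insert_of_notMem, Finset.card_singleton]
    rw [Finset.mem_singleton]
    intro hh
    have := congrArg Fin.val hh
    simp only [hattF] at this
    have := HISTaux.d_le_att (d := d) (j := v.val)
    omega
end

section
/- In the graph G of the construction above (with K a clique on d ≥ 2 vertices, cliques K_y on d+1 vertices attached to each y ∈ K \ {x}, and a clique W with |W| ≥ d+1 attached to x), for every spanning tree T of G, the edge set of T restricted to K forms a spanning tree of the complete graph on K. -/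
attribute [local instance] Classical.propDecidable

def constructionRel (d w : ℕ) [NeZero d] [NeZero w] :
    Fin d ⊕ (({y : Fin d // y ≠ 0} × Fin (d + 1)) ⊕ Fin w) →
    Fin d ⊕ (({y : Fin d // y ≠ 0} × Fin (d + 1)) ⊕ Fin w) → Prop
  | Sum.inl _, Sum.inl _ => True
  | Sum.inr (Sum.inl p), Sum.inr (Sum.inl q) => p.1 = q.1
  | Sum.inr (Sum.inr _), Sum.inr (Sum.inr _) => True
  | Sum.inl a, Sum.inr (Sum.inl p) => a = p.1.1 ∧ p.2 = 0
  | Sum.inl a, Sum.inr (Sum.inr i) => a = 0 ∧ i = 0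
  | _, _ => False

/-- The graph `G` of the construction. -/
def constructionGraph (d w : ℕ) [NeZero d] [NeZero w] :
    SimpleGraph (Fin d ⊕ (({y : Fin d // y ≠ 0} × Fin (d + 1)) ⊕ Fin w)) :=
  SimpleGraph.fromRel (constructionRel d w)

/-- Retraction of the construction's vertex set onto the central clique `K`. -/
def retr (d w : ℕ) [NeZero d] [NeZero w] :
    Fin d ⊕ (({y : Fin d // y ≠ 0} × Fin (d + 1)) ⊕ Fin w) → Fin d
  | Sum.inl a => a
  | Sum.inr (Sum.inl p) => p.1.1
  | Sum.inr (Sum.inr _) => 0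

lemma retr_key (d w : ℕ) [NeZero d] [NeZero w]
    (T : SimpleGraph (Fin d ⊕ (({y : Fin d // y ≠ 0} × Fin (d + 1)) ⊕ Fin w)))
    (hle : T ≤ constructionGraph d w) {u v} (h : T.Adj u v) :
    retr d w u = retr d w v ∨
      (T.comap (Sum.inl : Fin d → _)).Adj (retr d w u) (retr d w v) := by
  have hg := hle h
  rw [constructionGraph, SimpleGraph.fromRel_adj] at hg
  obtain ⟨hne, hrel⟩ := hg
  match u, v with
  | Sum.inl a, Sum.inl b =>
      exact Or.inr h
  | Sum.inl a, Sum.inr (Sum.inl p) =>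
      rcases hrel with ⟨ha, _⟩ | hf
      · exact Or.inl ha
      · exact absurd hf (by simp [constructionRel])
  | Sum.inl a, Sum.inr (Sum.inr i) =>
      rcases hrel with ⟨ha, _⟩ | hf
      · exact Or.inl ha
      · exact absurd hf (by simp [constructionRel])
  | Sum.inr (Sum.inl p), Sum.inl a =>
      rcases hrel with hf | ⟨ha, _⟩
      · exact absurd hf (by simp [constructionRel])
      · exact Or.inl ha.symm
  | Sum.inr (Sum.inr i), Sum.inl a =>
      rcases hrel with hf | ⟨ha, _⟩
      · exact absurd hf (by simp [constructionRel])
      · exact Or.inl ha.symm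
  | Sum.inr (Sum.inl p), Sum.inr (Sum.inl q) =>
      rcases hrel with hpq | hqp
      · exact Or.inl (congrArg Subtype.val hpq)
      · exact Or.inl (congrArg Subtype.val hqp.symm)
  | Sum.inr (Sum.inl p), Sum.inr (Sum.inr i) =>
      rcases hrel with hf | hf <;> exact absurd hf (by simp [constructionRel])
  | Sum.inr (Sum.inr i), Sum.inr (Sum.inl p) =>
      rcases hrel with hf | hf <;> exact absurd hf (by simp [constructionRel])
  | Sum.inr (Sum.inr i), Sum.inr (Sum.inr j) =>
      exact Or.inl rfl

lemma retr_reach (d w : ℕ) [NeZero d] [NeZero w]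
    (T : SimpleGraph (Fin d ⊕ (({y : Fin d // y ≠ 0} × Fin (d + 1)) ⊕ Fin w)))
    (hle : T ≤ constructionGraph d w) {u v} (p : T.Walk u v) :
    (T.comap (Sum.inl : Fin d → _)).Reachable (retr d w u) (retr d w v) := by
  induction p with
  | nil => exact SimpleGraph.Reachable.refl _
  | cons h p ih =>
      rcases retr_key d w T hle h with heq | hadj
      · rwa [heq]
      · exact hadj.reachable.trans ih

/-- For every spanning tree `T` of the construction graph `G`, the edges of `T`
restricted to the central clique `K` (identified with `Fin d` via `Sum.inl`) form a
spanning tree of the complete graph on `K`. -/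
theorem stmt_6 (d w : ℕ) [NeZero d] [NeZero w] (hd : 2 ≤ d) (hw : d + 1 ≤ w)
    (T : SimpleGraph (Fin d ⊕ (({y : Fin d // y ≠ 0} × Fin (d + 1)) ⊕ Fin w)))
    (hle : T ≤ constructionGraph d w) (hconn : T.Connected) (hacyc : T.IsAcyclic) :
    (SimpleGraph.comap
      (Sum.inl : Fin d → Fin d ⊕ (({y : Fin d // y ≠ 0} × Fin (d + 1)) ⊕ Fin w)) T).IsTree := by
  constructor
  · constructor
    · intro a b
      obtain ⟨p⟩ := hconn (Sum.inl a) (Sum.inl b)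
      simpa [retr] using retr_reach d w T hle p
  · intro v p hp
    let f : (SimpleGraph.comap (Sum.inl : Fin d → _) T) →g T :=
      ⟨Sum.inl, fun h => h⟩
    exact hacyc (p.map f) (hp.map (fun _ _ h => Sum.inl.injEq .. ▸ h))
end

section
/- For d ≥ 2, there is no constant property: specifically, it is false that every connected graph of minimum degree at least d has a spanning tree in which every internal vertex has degree at least 3. -/
attribute [local instance] Classical.propDecidable

/-!
Counterexample construction: for given `d ≥ 2`, let `n = (d+1)*(d+2)`.
Vertices are pairs (column `i ≤ d`, slot `j ≤ d+1`), encoded as `(d+2)*i + j`.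
Slot 0 vertices ("cores") form a clique `K_{d+1}`; slots `1..d+1` in each column form a
clique `K_{d+1}` (the "blob"); the core of a column is additionally joined to slot 1 of
its column (a single bridge). Minimum degree is `d` (in fact `≥ d`), the graph is
connected, but there is no spanning tree whose internal vertices all have degree ≥ 3:
in such a tree every bridge is forced, so each core's tree-degree is (number of core
neighbours) + 1, hence no core has exactly one core tree-neighbour; thus the core part
of the tree is a leafless forest, which must be edgeless; but then column 0 is closed
under tree adjacency, contradicting connectivity.
-/

namespace Stmt7Refute

def nn (d : ℕ) : ℕ := (d+1)*(d+2)

lemma nn_pos (d : ℕ) : 0 < nn d := Nat.mul_pos (by omega) (by omega)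

lemma val_lt (d : ℕ) (v : Fin (nn d)) : v.val < (d+1)*(d+2) := v.isLt

/-- vertex in column `i`, slot `j` (valid for `i ≤ d`, `j < d+2`). -/
def vert (d i j : ℕ) : Fin (nn d) := ⟨((d+2)*i + j) % nn d, Nat.mod_lt _ (nn_pos d)⟩

lemma vert_val (d : ℕ) {i j : ℕ} (hi : i ≤ d) (hj : j < d + 2) :
    (vert d i j).val = (d+2)*i + j := by
  show ((d+2)*i + j) % nn d = _
  apply Nat.mod_eq_of_lt
  have h : (d+2)*(i+1) ≤ (d+2)*(d+1) := Nat.mul_le_mul (le_refl (d+2)) (by omega)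
  rw [Nat.mul_succ] at h
  have : nn d = (d+2)*(d+1) := by unfold nn; ring
  omega

lemma vert_div (d : ℕ) {i j : ℕ} (hi : i ≤ d) (hj : j < d + 2) :
    (vert d i j).val / (d+2) = i := by
  rw [vert_val d hi hj, Nat.mul_add_div (by omega), Nat.div_eq_of_lt hj, Nat.add_zero]

lemma vert_mod (d : ℕ) {i j : ℕ} (hi : i ≤ d) (hj : j < d + 2) :
    (vert d i j).val % (d+2) = j := by
  rw [vert_val d hi hj, Nat.mul_add_mod, Nat.mod_eq_of_lt hj]

lemma sl_lt (d : ℕ) (v : Fin (nn d)) : v.val % (d+2) < d + 2 := Nat.mod_lt _ (by omega)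

lemma ci_le (d : ℕ) (v : Fin (nn d)) : v.val / (d+2) ≤ d := by
  have h : v.val / (d+2) < d + 1 :=
    (Nat.div_lt_iff_lt_mul (by omega)).2 (val_lt d v)
  omega

lemma v_eq_vert (d : ℕ) (v : Fin (nn d)) :
    v = vert d (v.val/(d+2)) (v.val%(d+2)) := by
  apply Fin.ext
  rw [vert_val d (ci_le d v) (sl_lt d v)]
  exact (Nat.div_add_mod v.val (d+2)).symm

lemma eq_of_divmod (d : ℕ) {u w : Fin (nn d)}
    (h1 : u.val/(d+2) = w.val/(d+2)) (h2 : u.val%(d+2) = w.val%(d+2)) : u = w := by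
  apply Fin.ext
  have hu := Nat.div_add_mod u.val (d+2)
  have hw := Nat.div_add_mod w.val (d+2)
  rw [h1, h2] at hu
  exact hu.symm.trans hw

/-- The counterexample graph. -/
def Gr (d : ℕ) : SimpleGraph (Fin (nn d)) where
  Adj a b := a ≠ b ∧
    ((a.val / (d+2) = b.val / (d+2) ∧ (a.val % (d+2) = 0 → b.val % (d+2) ≤ 1) ∧
      (b.val % (d+2) = 0 → a.val % (d+2) ≤ 1)) ∨
     (a.val % (d+2) = 0 ∧ b.val % (d+2) = 0))
  symm := by
    constructor
    rintro a b ⟨h1, h2⟩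
    refine ⟨h1.symm, ?_⟩
    rcases h2 with ⟨hd, hi1, hi2⟩ | ⟨h0a, h0b⟩
    · exact Or.inl ⟨hd.symm, hi2, hi1⟩
    · exact Or.inr ⟨h0b, h0a⟩
  loopless := ⟨fun a h => h.1 rfl⟩

lemma adj_core_core (d : ℕ) {i i' : ℕ} (hi : i ≤ d) (hi' : i' ≤ d) (hne : i ≠ i') :
    (Gr d).Adj (vert d i 0) (vert d i' 0) := by
  show _ ∧ _
  refine ⟨fun h => hne ?_, Or.inr ⟨vert_mod d hi (by omega), vert_mod d hi' (by omega)⟩⟩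
  have h1 := vert_div d hi (show 0 < d+2 by omega)
  have h2 := vert_div d hi' (show 0 < d+2 by omega)
  rw [h] at h1
  omega

lemma adj_bridge (d : ℕ) {i : ℕ} (hi : i ≤ d) :
    (Gr d).Adj (vert d i 0) (vert d i 1) := by
  have hm0 := vert_mod d hi (show (0:ℕ) < d+2 by omega)
  have hm1 := vert_mod d hi (show (1:ℕ) < d+2 by omega)
  show _ ∧ _
  refine ⟨fun h => ?_, Or.inl ⟨?_, ?_, ?_⟩⟩
  · rw [h] at hm0; omega
  · rw [vert_div d hi (by omega), vert_div d hi (by omega)]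
  · intro _; omega
  · intro h; omega

lemma adj_blob (d : ℕ) {i j k : ℕ} (hi : i ≤ d) (hj : 1 ≤ j) (hj' : j < d+2)
    (hk : 1 ≤ k) (hk' : k < d+2) (hjk : j ≠ k) :
    (Gr d).Adj (vert d i j) (vert d i k) := by
  have hmj := vert_mod d hi hj'
  have hmk := vert_mod d hi hk'
  show _ ∧ _
  refine ⟨fun h => ?_, Or.inl ⟨?_, ?_, ?_⟩⟩
  · rw [h] at hmj; omega
  · rw [vert_div d hi hj', vert_div d hi hk']
  · intro h; omega
  · intro h; omega

lemma Gr_connected (d : ℕ) (hd : 2 ≤ d) : (Gr d).Connected := by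
  rw [SimpleGraph.connected_iff]
  refine ⟨?_, ⟨vert d 0 0⟩⟩
  have toCore : ∀ v : Fin (nn d), (Gr d).Reachable v (vert d (v.val/(d+2)) 0) := by
    intro v
    have hci := ci_le d v
    have hsl := sl_lt d v
    by_cases h0 : v.val % (d+2) = 0
    · have hv := v_eq_vert d v
      rw [h0] at hv
      rw [← hv]
    · by_cases h1 : v.val % (d+2) = 1
      · have hv := v_eq_vert d v
        rw [h1] at hv
        nth_rewrite 1 [hv]
        exact ((adj_bridge d hci).symm).reachable
      · have hv := v_eq_vert d v
        have r1 : (Gr d).Reachable v (vert d (v.val/(d+2)) 1) := by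
          nth_rewrite 1 [hv]
          exact (adj_blob d hci (by omega) hsl (by omega) (by omega) (by omega)).reachable
        exact r1.trans ((adj_bridge d hci).symm).reachable
  have coreCore : ∀ i : ℕ, i ≤ d → (Gr d).Reachable (vert d i 0) (vert d 0 0) := by
    intro i hi
    rcases Nat.eq_zero_or_pos i with rfl | hpos
    · exact SimpleGraph.Reachable.refl _
    · exact (adj_core_core d hi (by omega) (by omega)).reachable
  intro a b
  exact ((toCore a).trans (coreCore _ (ci_le d a))).trans
    ((coreCore _ (ci_le d b)).symm.trans (toCore b).symm)

lemma Gr_mindeg (d : ℕ) (hd : 2 ≤ d) : ∀ v, d ≤ (Gr d).degree v := by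
  intro v
  have hdeg : (Gr d).degree v = ((Gr d).neighborFinset v).card := rfl
  rw [hdeg]
  by_cases h0 : v.val % (d+2) = 0
  · -- core vertex: the other d cores are neighbours
    have hmem : ∀ i ∈ (Finset.range (d+1)).erase (v.val/(d+2)),
        vert d i 0 ∈ (Gr d).neighborFinset v := by
      intro i hi
      obtain ⟨hne, hrange⟩ := Finset.mem_erase.1 hi
      rw [Finset.mem_range] at hrange
      rw [SimpleGraph.mem_neighborFinset]
      have hv := v_eq_vert d v
      rw [h0] at hv
      rw [hv]
      exact adj_core_core d (ci_le d v) (by omega) (fun h => hne h.symm)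
    have hinj : Set.InjOn (fun i => vert d i 0) ((Finset.range (d+1)).erase (v.val/(d+2))) := by
      intro i hi i' hi' h
      have hir := Finset.mem_range.1 (Finset.mem_erase.1 (Finset.mem_coe.1 hi)).2
      have hir' := Finset.mem_range.1 (Finset.mem_erase.1 (Finset.mem_coe.1 hi')).2
      have h' : vert d i 0 = vert d i' 0 := h
      have h1 := vert_div d (show i ≤ d by omega) (show 0 < d+2 by omega)
      have h2 := vert_div d (show i' ≤ d by omega) (show 0 < d+2 by omega)
      rw [h'] at h1
      omega
    have := Finset.card_le_card_of_injOn _ hmem hinj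
    have hcard : ((Finset.range (d+1)).erase (v.val/(d+2))).card = d := by
      rw [Finset.card_erase_of_mem (Finset.mem_range.2 (by have := ci_le d v; omega)),
        Finset.card_range]
      omega
    omega
  · -- blob vertex: the other d blob vertices of the column are neighbours
    have hsl := sl_lt d v
    have hmem : ∀ j ∈ (Finset.Icc 1 (d+1)).erase (v.val % (d+2)),
        vert d (v.val/(d+2)) j ∈ (Gr d).neighborFinset v := by
      intro j hj
      obtain ⟨hne, hicc⟩ := Finset.mem_erase.1 hj
      rw [Finset.mem_Icc] at hicc
      rw [SimpleGraph.mem_neighborFinset]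
      have hv := v_eq_vert d v
      nth_rewrite 1 [hv]
      exact adj_blob d (ci_le d v) (by omega) hsl (by omega) (by omega)
        (fun h => hne (h.symm))
    have hinj : Set.InjOn (fun j => vert d (v.val/(d+2)) j)
        ((Finset.Icc 1 (d+1)).erase (v.val % (d+2))) := by
      intro j hj j' hj' h
      have hjr := Finset.mem_Icc.1 (Finset.mem_erase.1 (Finset.mem_coe.1 hj)).2
      have hjr' := Finset.mem_Icc.1 (Finset.mem_erase.1 (Finset.mem_coe.1 hj')).2
      have h' : vert d (v.val/(d+2)) j = vert d (v.val/(d+2)) j' := h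
      have h1 := vert_mod d (ci_le d v) (show j < d+2 by omega)
      have h2 := vert_mod d (ci_le d v) (show j' < d+2 by omega)
      rw [h'] at h1
      omega
    have := Finset.card_le_card_of_injOn _ hmem hinj
    have hcard : ((Finset.Icc 1 (d+1)).erase (v.val % (d+2))).card = d := by
      rw [Finset.card_erase_of_mem (Finset.mem_Icc.2 (by omega)), Nat.card_Icc]
      omega
    omega

lemma closed_walk {V : Type*} {T : SimpleGraph V} {S : Set V}
    (hS : ∀ ⦃a b⦄, T.Adj a b → a ∈ S → b ∈ S) :
    ∀ {a b : V} (_p : T.Walk a b), a ∈ S → b ∈ S := by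
  intro a b p
  induction p with
  | nil => exact id
  | cons h q ih => intro ha; exact ih (hS h ha)

lemma no_hist (d : ℕ) (hd : 2 ≤ d) (T : SimpleGraph (Fin (nn d))) (hle : T ≤ Gr d)
    (hconn : T.Connected) (hacyc : T.IsAcyclic)
    (hdeg : ∀ v, 2 ≤ T.degree v → 3 ≤ T.degree v) : False := by
  -- Step 1: every bridge is in T
  have bridge : ∀ i : ℕ, i ≤ d → T.Adj (vert d i 0) (vert d i 1) := by
    intro i hi
    by_contra hnb
    have hclosed : ∀ ⦃a b : Fin (nn d)⦄, T.Adj a b →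
        a ∈ {v : Fin (nn d) | v.val/(d+2) = i ∧ v.val%(d+2) ≠ 0} →
        b ∈ {v : Fin (nn d) | v.val/(d+2) = i ∧ v.val%(d+2) ≠ 0} := by
      rintro a b hab ⟨hai, ha0⟩
      have g : _ ∧ _ := hle hab
      rcases g.2 with ⟨hdiv, h1, h2⟩ | ⟨h0a, h0b⟩
      · refine ⟨by rw [← hdiv]; exact hai, ?_⟩
        intro hb0
        have ha1 : a.val % (d+2) = 1 := by have := h2 hb0; omega
        have haeq : a = vert d i 1 := by
          have hv := v_eq_vert d a
          rw [ha1, hai] at hv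
          exact hv
        have hbeq : b = vert d i 0 := by
          have hv := v_eq_vert d b
          rw [hb0, ← hdiv, hai] at hv
          exact hv
        rw [haeq, hbeq] at hab
        exact hnb hab.symm
      · exact absurd h0a ha0
    obtain ⟨p⟩ := hconn.preconnected (vert d i 1) (vert d i 0)
    have hmem := closed_walk hclosed p
      ⟨vert_div d hi (by omega), by rw [vert_mod d hi (by omega)]; omega⟩
    have := hmem.2
    rw [vert_mod d hi (by omega)] at this
    exact this rfl
  -- Step 2: neighbourhood of a core vertex
  have coreNbhd : ∀ i : ℕ, (hi : i ≤ d) → T.neighborFinset (vert d i 0) =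
      insert (vert d i 1)
        ((T.neighborFinset (vert d i 0)).filter (fun u => u.val % (d+2) = 0)) := by
    intro i hi
    ext u
    simp only [Finset.mem_insert, Finset.mem_filter, SimpleGraph.mem_neighborFinset]
    constructor
    · intro hadj
      have g : _ ∧ _ := hle hadj
      have hc0 : (vert d i 0).val % (d+2) = 0 := vert_mod d hi (by omega)
      have hcdiv : (vert d i 0).val / (d+2) = i := vert_div d hi (by omega)
      rcases g.2 with ⟨hdiv, h1, _h2⟩ | ⟨_h0a, h0b⟩
      · have hu1 : u.val % (d+2) ≤ 1 := h1 hc0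
        have hdivu : u.val/(d+2) = i := by rw [← hdiv]; exact hcdiv
        by_cases hu0 : u.val % (d+2) = 0
        · exfalso
          apply g.1
          exact (eq_of_divmod d (by rw [hcdiv, hdivu]) (by rw [hc0, hu0]))
        · left
          have hu1' : u.val % (d+2) = 1 := by omega
          have hv := v_eq_vert d u
          rw [hu1', hdivu] at hv
          exact hv.symm ▸ rfl
      · exact Or.inr ⟨hadj, h0b⟩
    · rintro (rfl | ⟨h, _⟩)
      · exact bridge i hi
      · exact h
  -- Step 3: a core vertex with a core neighbour has another core neighbour
  have coreTwo : ∀ i : ℕ, (hi : i ≤ d) → ∀ b : Fin (nn d), T.Adj (vert d i 0) b →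
      b.val % (d+2) = 0 →
      ∃ w : Fin (nn d), T.Adj (vert d i 0) w ∧ w.val % (d+2) = 0 ∧ w ≠ b := by
    intro i hi b hb hb0
    have hbF : b ∈ (T.neighborFinset (vert d i 0)).filter (fun u => u.val % (d+2) = 0) :=
      Finset.mem_filter.2 ⟨(SimpleGraph.mem_neighborFinset T (vert d i 0) b).2 hb, hb0⟩
    have hnotmem : vert d i 1 ∉
        (T.neighborFinset (vert d i 0)).filter (fun u => u.val % (d+2) = 0) := by
      intro hmem
      have := (Finset.mem_filter.1 hmem).2
      rw [vert_mod d hi (by omega)] at this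
      omega
    have hcard : T.degree (vert d i 0) =
        ((T.neighborFinset (vert d i 0)).filter (fun u => u.val % (d+2) = 0)).card + 1 := by
      have hdeg' : T.degree (vert d i 0) = (T.neighborFinset (vert d i 0)).card := rfl
      have hc := congrArg Finset.card (coreNbhd i hi)
      rw [Finset.card_insert_of_notMem hnotmem] at hc
      exact hdeg'.trans hc
    have h2 : 2 ≤ T.degree (vert d i 0) := by
      have : 1 ≤ ((T.neighborFinset (vert d i 0)).filter
          (fun u => u.val % (d+2) = 0)).card := Finset.card_pos.2 ⟨b, hbF⟩
      omega
    have h3 := hdeg _ h2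
    have hgt : 1 < ((T.neighborFinset (vert d i 0)).filter
        (fun u => u.val % (d+2) = 0)).card := by omega
    obtain ⟨w, hwF, hwne⟩ := Finset.exists_mem_ne hgt b
    have hw := Finset.mem_filter.1 hwF
    exact ⟨w, (SimpleGraph.mem_neighborFinset T (vert d i 0) w).1 hw.1, hw.2, hwne⟩
  -- Step 4: no two core vertices are adjacent in T
  have nocore : ∀ a0 b0 : Fin (nn d), a0.val%(d+2) = 0 → b0.val%(d+2) = 0 →
      ¬ T.Adj a0 b0 := by
    intro a0 b0 ha0 hb0 hadj
    have grow : ∀ k : ℕ, ∃ (a b : Fin (nn d)) (h : T.Adj a b) (q : T.Walk b b0),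
        (SimpleGraph.Walk.cons h q).IsPath ∧
        (SimpleGraph.Walk.cons h q).length = k + 1 ∧
        ∀ z ∈ (SimpleGraph.Walk.cons h q).support, z.val % (d+2) = 0 := by
      intro k
      induction k with
      | zero =>
        refine ⟨a0, b0, hadj, SimpleGraph.Walk.nil, ?_, by simp, ?_⟩
        · rw [SimpleGraph.Walk.cons_isPath_iff]
          refine ⟨SimpleGraph.Walk.IsPath.nil, ?_⟩
          rw [SimpleGraph.Walk.support_nil]
          simp [hadj.ne]
        · intro z hz
          rw [SimpleGraph.Walk.support_cons, SimpleGraph.Walk.support_nil] at hz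
          rcases List.mem_cons.1 hz with rfl | hz'
          · exact ha0
          · rcases List.mem_singleton.1 hz' with rfl
            exact hb0
      | succ k ih =>
        obtain ⟨a, b, h, q, hp, hl, hs⟩ := ih
        have haC : a.val % (d+2) = 0 := hs a (SimpleGraph.Walk.start_mem_support _)
        have hbC : b.val % (d+2) = 0 := by
          apply hs b
          rw [SimpleGraph.Walk.support_cons]
          exact List.mem_cons.2 (Or.inr (SimpleGraph.Walk.start_mem_support q))
        have haeq : a = vert d (a.val/(d+2)) 0 := by
          have hv := v_eq_vert d a
          rw [haC] at hv
          exact hv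
        obtain ⟨w, hw_adj, hw0, hwb⟩ := coreTwo (a.val/(d+2)) (ci_le d a) b
          (by rw [← haeq]; exact h) hbC
        rw [← haeq] at hw_adj
        have hns : w ∉ (SimpleGraph.Walk.cons h q).support := by
          intro hmem
          have hPpath : ((SimpleGraph.Walk.cons h q).takeUntil w hmem).IsPath :=
            hp.takeUntil hmem
          have hedge : s(w, a) ∉ ((SimpleGraph.Walk.cons h q).takeUntil w hmem).edges := by
            intro he
            have he' : s(a, w) ∈ (SimpleGraph.Walk.cons h q).edges :=
              SimpleGraph.Walk.edges_takeUntil_subset _ hmem (by rwa [Sym2.eq_swap] at he)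
            rw [SimpleGraph.Walk.edges_cons] at he'
            rcases List.mem_cons.1 he' with h1 | h2
            · exact hwb (Sym2.congr_right.1 h1)
            · exact ((SimpleGraph.Walk.cons_isPath_iff h q).1 hp).2
                (SimpleGraph.Walk.fst_mem_support_of_mem_edges q h2)
          have hcyc := SimpleGraph.Path.cons_isCycle
            ⟨(SimpleGraph.Walk.cons h q).takeUntil w hmem, hPpath⟩ hw_adj.symm hedge
          exact hacyc _ hcyc
        refine ⟨w, a, hw_adj.symm, SimpleGraph.Walk.cons h q, ?_, ?_, ?_⟩
        · rw [SimpleGraph.Walk.cons_isPath_iff]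
          exact ⟨hp, hns⟩
        · rw [SimpleGraph.Walk.length_cons, hl]
        · intro z hz
          rw [SimpleGraph.Walk.support_cons] at hz
          rcases List.mem_cons.1 hz with rfl | hz'
          · exact hw0
          · exact hs z hz'
    obtain ⟨a, b, h, q, hp, hl, -⟩ := grow (nn d)
    have hlt := hp.length_lt
    rw [hl, Fintype.card_fin] at hlt
    omega
  -- Step 5: column 0 is closed under T-adjacency, contradicting connectivity
  have hcl : ∀ ⦃u v : Fin (nn d)⦄, T.Adj u v →
      u ∈ {v : Fin (nn d) | v.val/(d+2) = 0} → v ∈ {v : Fin (nn d) | v.val/(d+2) = 0} := by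
    intro u v huv hu
    have g : _ ∧ _ := hle huv
    rcases g.2 with ⟨hdiv, -, -⟩ | ⟨h0u, h0v⟩
    · show v.val/(d+2) = 0
      rw [← hdiv]
      exact hu
    · exact absurd huv (nocore u v h0u h0v)
  obtain ⟨p⟩ := hconn.preconnected (vert d 0 0) (vert d 1 0)
  have hmem := closed_walk hcl p (by
    show (vert d 0 0).val/(d+2) = 0
    rw [vert_div d (by omega) (by omega)])
  have : (vert d 1 0).val/(d+2) = 0 := hmem
  rw [vert_div d (by omega) (by omega)] at this
  omega

end Stmt7Refute

/-- For `d ≥ 2`, it is false that every connected (finite) graph of minimum degree at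
least `d` has a spanning tree in which every internal vertex has degree at least 3. -/
theorem stmt_7 (d : ℕ) (hd : 2 ≤ d) :
    ¬ ∀ (n : ℕ) (G : SimpleGraph (Fin n)), G.Connected → (∀ v, d ≤ G.degree v) →
      ∃ T : SimpleGraph (Fin n), T ≤ G ∧ T.Connected ∧ T.IsAcyclic ∧
        ∀ v, 2 ≤ T.degree v → 3 ≤ T.degree v := by
  intro h
  obtain ⟨T, hle, hc, hac, hdeg⟩ :=
    h (Stmt7Refute.nn d) (Stmt7Refute.Gr d) (Stmt7Refute.Gr_connected d hd)
      (Stmt7Refute.Gr_mindeg d hd)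
  exact Stmt7Refute.no_hist d hd T hle hc hac hdeg
end
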